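/- Let Γ be a rooted tree with positive edge lengths t, let e be a non-hanging edge of Γ, and let b be a hanging edge that is a proper descendant of e. Set l = up(b) \ ({b} ∪ up(e)) and D = the set of proper descendants of e other than b, and let Γ' be obtained from Γ by the transformation T1 (delete e, attaching the subtrees below e's lower endpoint directly to e's upper endpoint, and re-insert e between b and its parent vertex, keeping edge lengths). Then P₂(Γ, t) ≥ P₂(Γ', t); moreover, if D \ l is nonempty, then P₂(Γ, t) > P₂(Γ', t). -/

import Mathlib

/-! T1 does not change which edges are hanging, so of `2 P₂` only the term
`Σ_x Σ_{f ∈ up x} t_x t_f` changes, and only through the paths of `e` and of its proper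
descendants. A descendant `x ∉ {e, b}` merely loses `e` from `up x`, while `e`, re-inserted
between `b` and its old parent, gets `up' e = up b \ {b} = up e ∪ l`. Hence
`2 (P₂(Γ) - P₂(Γ')) = t_e (Σ_D t - Σ_l t) = t_e Σ_{D \ l} t`, since `l ⊆ D`. -/

/-- A rooted tree with edge set `E`, encoded by its parent-edge function:
`par e = some f` if `f` is the next edge on the simple path from `e` towards the
root, and `par e = none` if `e` is incident to the root.  Acyclicity (hence, for
a finite edge set, that we really get a tree with vertex set `E ⊕ {root}`) is
guaranteed by a rank function decreasing along `par`. -/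
structure EdgeRootedTree (E : Type*) where
  par : E → Option E
  wf : ∃ rank : E → ℕ, ∀ a b, par a = some b → rank b < rank a

namespace EdgeRootedTree

variable {E : Type*}

/-- `Γ.inUp e f` : the edge `f` lies on the simple path from `e` to the root
(`f` is an ancestor of `e`, or `f = e`). -/
def inUp (Γ : EdgeRootedTree E) (e f : E) : Prop :=
  Relation.ReflTransGen (fun a b => Γ.par a = some b) e f

open scoped Classical in
/-- `up(e)` : the set of edges of the simple path from `e` to the root, `e` included. -/
noncomputable def up (Γ : EdgeRootedTree E) [Fintype E] (e : E) : Finset E :=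
  Finset.univ.filter (Γ.inUp e)

/-- An edge is hanging if its lower endpoint is a leaf distinct from the root,
i.e. if it has no child edge. -/
def IsHanging (Γ : EdgeRootedTree E) (e : E) : Prop :=
  ∀ f, Γ.par f ≠ some e

open scoped Classical in
/-- The set `H` of hanging edges. -/
noncomputable def hanging (Γ : EdgeRootedTree E) [Fintype E] : Finset E :=
  Finset.univ.filter Γ.IsHanging

/-- The second asymptotic coefficient polynomial `P₂`, defined by
`2 P₂ = -(Σ_E t)² - Σ_E t² - Σ_H t² + 2 (Σ_H t)(Σ_E t) + Σ_{e∈E} Σ_{f∈up(e)} t_e t_f`. -/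
noncomputable def P2 [Fintype E] (Γ : EdgeRootedTree E) (t : E → ℝ) : ℝ :=
  (-(∑ e, t e) ^ 2 - ∑ e, t e ^ 2 - ∑ e ∈ Γ.hanging, t e ^ 2
      + 2 * (∑ e ∈ Γ.hanging, t e) * (∑ e, t e)
      + ∑ e, ∑ f ∈ Γ.up e, t e * t f) / 2

end EdgeRootedTree

namespace EdgeRootedTree

variable {E : Type*}

open scoped Classical in
/-- The parent function of the tree obtained from `Γ` by the transformation **T1**:
the edge `e` is deleted (the subtrees below the lower endpoint of `e` are attached
directly to the upper endpoint of `e`) and re-inserted between the hanging edge `b`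
and its parent vertex. -/
noncomputable def T1par (Γ : EdgeRootedTree E) (e b : E) : E → Option E := fun f =>
  if f = b then some e
  else if f = e then (if Γ.par b = some e then Γ.par e else Γ.par b)
  else if Γ.par f = some e then Γ.par e
  else Γ.par f

end EdgeRootedTree

namespace EdgeRootedTree

variable {E : Type*} {Γ Γ' : EdgeRootedTree E} {a b c e f p x : E}

section Paths

theorem rank_le_of_inUp {rank : E → ℕ} (hr : ∀ a b, Γ.par a = some b → rank b < rank a)
    (h : Γ.inUp a c) : rank c ≤ rank a := by
  induction h with
  | refl => exact le_rfl
  | tail _ hstep ih => exact (hr _ _ hstep).le.trans ih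

theorem par_ne_self (Γ : EdgeRootedTree E) (a : E) : Γ.par a ≠ some a := by
  obtain ⟨rank, hr⟩ := Γ.wf
  exact fun h => lt_irrefl _ (hr _ _ h)

theorem inUp_antisymm (h₁ : Γ.inUp a c) (h₂ : Γ.inUp c a) : a = c := by
  obtain ⟨rank, hr⟩ := Γ.wf
  rcases h₁.cases_head with rfl | ⟨d, had, hdc⟩
  · rfl
  · have := hr _ _ had
    have := rank_le_of_inUp hr hdc
    have := rank_le_of_inUp hr h₂
    omega

theorem not_inUp_of_par_eq_some (h : Γ.par a = some p) : ¬ Γ.inUp p a := fun hpa =>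
  Γ.par_ne_self a (inUp_antisymm (.single h) hpa ▸ h)

theorem IsHanging.eq_of_inUp (hb : Γ.IsHanging b) (h : Γ.inUp x b) : x = b := by
  rcases h.cases_tail with rfl | ⟨c, _, hc⟩
  · rfl
  · exact absurd hc (hb c)

theorem inUp_total (h₁ : Γ.inUp a c) (h₂ : Γ.inUp a e) : Γ.inUp c e ∨ Γ.inUp e c :=
  Relation.ReflTransGen.total_of_right_unique
    (fun _ _ _ h h' => Option.some.inj (h.symm.trans h')) h₁ h₂

theorem inUp_iff_of_par_eq (h : ∀ c, Γ.inUp x c → Γ'.par c = Γ.par c) :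
    Γ'.inUp x f ↔ Γ.inUp x f := by
  constructor
  · intro hf
    induction hf with
    | refl => exact .refl
    | tail _ hstep ih => exact ih.tail (h _ ih ▸ hstep)
  · intro hf
    induction hf with
    | refl => exact .refl
    | tail hc hstep ih => exact ih.tail (h _ hc ▸ hstep)

end Paths

section UpSets

variable [Fintype E]

theorem mem_up : f ∈ Γ.up x ↔ Γ.inUp x f := by
  simp [up]

theorem mem_up_self : x ∈ Γ.up x := mem_up.2 .refl

theorem up_eq_insert_of_par_eq_some [DecidableEq E] (h : Γ.par x = some p) :
    Γ.up x = insert x (Γ.up p) := by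
  ext f
  rw [Finset.mem_insert, mem_up, mem_up, inUp, Relation.ReflTransGen.cases_head_iff, h]
  simp only [Option.some.injEq, exists_eq_left', eq_comm (a := f)]
  rfl

theorem up_eq_singleton_of_par_eq_none (h : Γ.par x = none) : Γ.up x = {x} := by
  ext f
  rw [Finset.mem_singleton, mem_up, inUp, Relation.ReflTransGen.cases_head_iff, h]
  simp [eq_comm (a := f)]

theorem up_eq_of_par_eq (h : ∀ c ∈ Γ.up x, Γ'.par c = Γ.par c) : Γ'.up x = Γ.up x := by
  ext f
  simp only [mem_up] at h ⊢
  exact inUp_iff_of_par_eq h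

theorem sum_up_sdiff_insert_up [DecidableEq E] {M : Type*} [AddCommGroup M] (t : E → M)
    (h : Γ.inUp b e) (hne : b ≠ e) :
    ∑ f ∈ Γ.up b \ insert b (Γ.up e), t f = ∑ f ∈ (Γ.up b).erase b, t f - ∑ f ∈ Γ.up e, t f := by
  have hbe : b ∉ Γ.up e := fun hb => hne (inUp_antisymm h (mem_up.1 hb))
  have hsub : insert b (Γ.up e) ⊆ Γ.up b :=
    Finset.insert_subset mem_up_self fun f hf => mem_up.2 (h.trans (mem_up.1 hf))
  rw [Finset.sum_sdiff_eq_sub hsub, Finset.sum_insert hbe, Finset.sum_erase_eq_sub mem_up_self]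
  abel

noncomputable def upPairSum (Γ : EdgeRootedTree E) (t : E → ℝ) : ℝ :=
  ∑ x, ∑ f ∈ Γ.up x, t x * t f

theorem P2_sub_P2_of_hanging_eq (h : Γ'.hanging = Γ.hanging) (t : E → ℝ) :
    P2 Γ t - P2 Γ' t = (upPairSum Γ t - upPairSum Γ' t) / 2 := by
  simp only [P2, upPairSum, h]
  ring

end UpSets

section T1

open scoped Classical

theorem T1par_of_not_inUp (hdesc : Γ.inUp b e) (hx : ¬ Γ.inUp x e) :
    T1par Γ e b x = Γ.par x := by
  have hxb : x ≠ b := by rintro rfl; exact hx hdesc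
  have hxe : x ≠ e := by rintro rfl; exact hx .refl
  have hpx : Γ.par x ≠ some e := fun h => hx (.single h)
  simp [T1par, hxb, hxe, hpx]

theorem isHanging_T1_iff (he : ¬ Γ.IsHanging e) (hne : b ≠ e) (hΓ' : Γ'.par = T1par Γ e b) :
    Γ'.IsHanging x ↔ Γ.IsHanging x := by
  simp only [IsHanging, hΓ', ← not_iff_not (a := ∀ _, _), not_forall, not_not] at he ⊢
  obtain ⟨g, hg⟩ := he
  constructor
  · rintro ⟨f, hf⟩
    unfold T1par at hf
    split_ifs at hf
    · exact Option.some.inj hf ▸ ⟨g, hg⟩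
    · exact ⟨e, hf⟩
    · exact ⟨b, hf⟩
    · exact ⟨e, hf⟩
    · exact ⟨f, hf⟩
  · rintro ⟨f, hf⟩
    by_cases hxe : x = e
    · exact ⟨b, by simp [T1par, hxe]⟩
    by_cases hfb : f = b
    · subst hfb
      exact ⟨e, by simp [T1par, Ne.symm hne, hf, hxe]⟩
    by_cases hfe : f = e
    · subst hfe
      by_cases hgb : g = b
      · subst hgb
        exact ⟨f, by simp [T1par, Ne.symm hne, hg, hf]⟩
      · have hgf : g ≠ f := by rintro rfl; exact Γ.par_ne_self g hg
        exact ⟨g, by simp [T1par, hgb, hgf, hg, hf]⟩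
    · exact ⟨f, by simp [T1par, hfb, hfe, hf, hxe]⟩

variable [Fintype E]

theorem hanging_T1 (he : ¬ Γ.IsHanging e) (hne : b ≠ e) (hΓ' : Γ'.par = T1par Γ e b) :
    Γ'.hanging = Γ.hanging := by
  ext x
  simp only [hanging, Finset.mem_filter, Finset.mem_univ, true_and, isHanging_T1_iff he hne hΓ']

theorem up_T1_of_not_inUp (hdesc : Γ.inUp b e) (hΓ' : Γ'.par = T1par Γ e b)
    (hx : ¬ Γ.inUp x e) : Γ'.up x = Γ.up x :=
  up_eq_of_par_eq fun c hc =>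
    (congrFun hΓ' c).trans (T1par_of_not_inUp hdesc fun hce => hx ((mem_up.1 hc).trans hce))

theorem up_T1_of_inUp (hb : Γ.IsHanging b) (hdesc : Γ.inUp b e) (hΓ' : Γ'.par = T1par Γ e b)
    (hx : Γ.inUp x e) (hxe : x ≠ e) (hxb : x ≠ b) : Γ'.up x = (Γ.up x).erase e := by
  induction hx using Relation.ReflTransGen.head_induction_on with
  | refl => exact absurd rfl hxe
  | @head x c hxc hce ih =>
    rw [up_eq_insert_of_par_eq_some hxc]
    by_cases hc : c = e
    · subst hc
      have hpar : Γ'.par x = Γ.par c := by simp [hΓ', T1par, hxe, hxb, hxc]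
      cases hq : Γ.par c with
      | none =>
        rw [up_eq_singleton_of_par_eq_none (hpar.trans hq), up_eq_singleton_of_par_eq_none hq,
          Finset.erase_insert_of_ne hxe, Finset.erase_singleton, insert_empty_eq]
      | some q =>
        have hqc : ¬ Γ.inUp q c := not_inUp_of_par_eq_some hq
        rw [up_eq_insert_of_par_eq_some (hpar.trans hq), up_T1_of_not_inUp hdesc hΓ' hqc,
          up_eq_insert_of_par_eq_some hq, Finset.erase_insert_of_ne hxe,
          Finset.erase_insert (mt mem_up.1 hqc)]
    · have hcb : c ≠ b := by rintro rfl; exact hb x hxc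
      have hpar : Γ'.par x = some c := by simp [hΓ', T1par, hxe, hxb, hxc, hc]
      rw [up_eq_insert_of_par_eq_some hpar, ih hc hcb, Finset.erase_insert_of_ne hxe]

theorem up_T1_edge (hb : Γ.IsHanging b) (hdesc : Γ.inUp b e) (hne : b ≠ e)
    (hΓ' : Γ'.par = T1par Γ e b) : Γ'.up e = (Γ.up b).erase b := by
  obtain ⟨c, hbc, hce⟩ := hdesc.cases_head.resolve_left hne
  have hcb : c ≠ b := by rintro rfl; exact Γ.par_ne_self c hbc
  rw [up_eq_insert_of_par_eq_some hbc,
    Finset.erase_insert fun h => hcb (hb.eq_of_inUp (mem_up.1 h))]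
  by_cases hc : c = e
  · subst hc
    refine up_eq_of_par_eq fun d hd => ?_
    by_cases hdc : d = c
    · simp [hΓ', T1par, hdc, hbc, Ne.symm hne]
    · exact (congrFun hΓ' d).trans
        (T1par_of_not_inUp hdesc fun h => hdc (inUp_antisymm (mem_up.1 hd) h).symm)
  · have hpar : Γ'.par e = some c := by simp [hΓ', T1par, Ne.symm hne, hbc, hc]
    rw [up_eq_insert_of_par_eq_some hpar, up_T1_of_inUp hb hdesc hΓ' hce hc hcb,
      Finset.insert_erase (mem_up.2 hce)]

theorem up_T1_hanging (hb : Γ.IsHanging b) (hdesc : Γ.inUp b e) (hne : b ≠ e)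
    (hΓ' : Γ'.par = T1par Γ e b) : Γ'.up b = Γ.up b := by
  have hpar : Γ'.par b = some e := by simp [hΓ', T1par]
  rw [up_eq_insert_of_par_eq_some hpar, up_T1_edge hb hdesc hne hΓ', Finset.insert_erase mem_up_self]

theorem sum_up_sub_sum_up_T1 (hb : Γ.IsHanging b) (hdesc : Γ.inUp b e) (hne : b ≠ e)
    (hΓ' : Γ'.par = T1par Γ e b) (t : E → ℝ) (x : E) :
    ∑ f ∈ Γ.up x, t f - ∑ f ∈ Γ'.up x, t f =
      (if x = e then -∑ f ∈ Γ.up b \ insert b (Γ.up e), t f else 0) +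
        (if Γ.inUp x e ∧ x ≠ e ∧ x ≠ b then t e else 0) := by
  by_cases hxe : x = e
  · subst hxe
    simp [up_T1_edge hb hdesc hne hΓ', sum_up_sdiff_insert_up t hdesc hne]
  by_cases hxD : Γ.inUp x e ∧ x ≠ e ∧ x ≠ b
  · rw [up_T1_of_inUp hb hdesc hΓ' hxD.1 hxD.2.1 hxD.2.2,
      Finset.sum_erase_eq_sub (mem_up.2 hxD.1)]
    simp [hxD]
  rw [if_neg hxe, if_neg hxD]
  by_cases hxb : x = b
  · subst hxb
    simp [up_T1_hanging hb hdesc hne hΓ']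
  · have hx : ¬ Γ.inUp x e := fun h => hxD ⟨h, hxe, hxb⟩
    simp [up_T1_of_not_inUp hdesc hΓ' hx]

theorem upPairSum_sub_upPairSum_T1 (hb : Γ.IsHanging b) (hdesc : Γ.inUp b e) (hne : b ≠ e)
    (hΓ' : Γ'.par = T1par Γ e b) (t : E → ℝ) :
    upPairSum Γ t - upPairSum Γ' t = t e * ∑ f ∈ (Finset.univ.filter fun f =>
      Γ.inUp f e ∧ f ≠ e ∧ f ≠ b) \ (Γ.up b \ insert b (Γ.up e)), t f := by
  set D := Finset.univ.filter fun f => Γ.inUp f e ∧ f ≠ e ∧ f ≠ b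
  set l := Γ.up b \ insert b (Γ.up e)
  have hlD : l ⊆ D := by
    intro f hf
    simp only [l, D, Finset.mem_sdiff, Finset.mem_insert, mem_up, not_or, Finset.mem_filter,
      Finset.mem_univ, true_and] at hf ⊢
    obtain ⟨hbf, hfb, hef⟩ := hf
    refine ⟨(inUp_total hbf hdesc).resolve_right hef, ?_, hfb⟩
    rintro rfl
    exact hef .refl
  calc upPairSum Γ t - upPairSum Γ' t
      = ∑ x, t x * (∑ f ∈ Γ.up x, t f - ∑ f ∈ Γ'.up x, t f) := by
        simp only [upPairSum, ← Finset.sum_sub_distrib, Finset.mul_sum, mul_sub]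
    _ = t e * -∑ f ∈ l, t f + ∑ x ∈ D, t x * t e := by
        simp [sum_up_sub_sum_up_T1 hb hdesc hne hΓ', mul_add, Finset.sum_add_distrib, D, l,
          Finset.sum_filter]
    _ = t e * ∑ f ∈ D \ l, t f := by
        rw [Finset.sum_sdiff_eq_sub hlD, ← Finset.sum_mul]
        ring

end T1

end EdgeRootedTree

open EdgeRootedTree in
open scoped Classical in
/-- Let `e` be a non-hanging edge of the rooted tree `Γ` and `b` a
hanging edge which is a proper descendant of `e`; let `l = up(b) \ ({b} ∪ up(e))` and
let `D` be the set of proper descendants of `e` other than `b`.  If `Γ'` is obtained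
from `Γ` by the transformation T1 (keeping the positive edge lengths `t`), then
`P₂(Γ,t) ≥ P₂(Γ',t)`, and moreover `P₂(Γ,t) > P₂(Γ',t)` as soon as `D \ l ≠ ∅`. -/
theorem T1_decreases_P2
    {E : Type*} [Fintype E] (Γ Γ' : EdgeRootedTree E) (t : E → ℝ)
    (ht : ∀ x, 0 < t x) (e b : E)
    (he : ¬ Γ.IsHanging e) (hb : Γ.IsHanging b)
    (hdesc : Γ.inUp b e) (hne : b ≠ e)
    (hΓ' : Γ'.par = T1par Γ e b) :
    P2 Γ' t ≤ P2 Γ t ∧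
      (((Finset.univ.filter fun f => Γ.inUp f e ∧ f ≠ e ∧ f ≠ b) \
          (Γ.up b \ insert b (Γ.up e))).Nonempty → P2 Γ' t < P2 Γ t) := by
  have hdiff := P2_sub_P2_of_hanging_eq (hanging_T1 he hne hΓ') t
  rw [upPairSum_sub_upPairSum_T1 hb hdesc hne hΓ' t] at hdiff
  refine ⟨sub_nonneg.1 ?_, fun hD => sub_pos.1 ?_⟩ <;> rw [hdiff]
  · exact div_nonneg (mul_nonneg (ht e).le (Finset.sum_nonneg fun f _ => (ht f).le)) zero_le_two
  · exact div_pos (mul_pos (ht e) (Finset.sum_pos (fun f _ => ht f) hD)) two_pos
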